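/- For k > 0, m ∈ ℕ, s > 1 with k - m = 1/p - 1/s + α (α > 0, 0 < p ≤ 1), the test functions f_r(z) = (1-r)^{k+1-α-1/p}/(1 - r z) on the unit disk satisfy ‖f_r‖_{H^s_m} ≥ C > 0 for all r ∈ (1/2, 1), where H^s_m = {f analytic : sup_{R<1} M_s(D^m f, R) < ∞} with norm ‖f‖_{H^s_m} = ‖D^m f‖_{H^s}. -/

import Mathlib

open MeasureTheory Metric ENNReal

/-- Coefficientwise fractional derivative of order `s`. -/
noncomputable def Dfrac (s : ℝ) (f : ℂ → ℂ) (z : ℂ) : ℂ :=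
  ∑' k : ℕ, ((Real.Gamma (s + k + 1) / (Real.Gamma (k + 1) * Real.Gamma (s + 1)) : ℝ) : ℂ)
    * (iteratedDeriv k f 0 / (Nat.factorial k : ℂ)) * z ^ k

/-- The `p`-th integral mean, valued in `ℝ≥0∞`. -/
noncomputable def MpE (p : ℝ) (f : ℂ → ℂ) (r : ℝ) : ℝ≥0∞ :=
  ((ENNReal.ofReal (2 * Real.pi))⁻¹ *
    ∫⁻ θ in Set.Ioc (0 : ℝ) (2 * Real.pi),
      ENNReal.ofReal (‖f ((r : ℂ) * Complex.exp (θ * Complex.I))‖ ^ p)) ^ (1 / p)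

/-! Take `R = r` in the supremum. Summing the binomial series gives
`D^m f_r(z) = (1 - r)^(k + 1 - α - 1/p) (1 - r z)^(-(m + 1))`, and on the arc `0 < θ ≤ 1 - r`
the point `z = r e^{iθ}` satisfies `|1 - r z| ≤ (1 - r²) + θ ≤ 3 (1 - r)`. There
`|D^m f_r(z)| ≥ 3^(-(m + 1)) (1 - r)^(-1/s)`, because the normalization exponent is
`m + 1 - 1/s`, so the arc alone contributes `3^(-(m + 1) s) / (2π)` to `M_s(D^m f_r, r)^s`. -/

open Nat in
theorem Real.Gamma_nat_add_div_eq_choose (m n : ℕ) :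
    Real.Gamma (m + n + 1) / (Real.Gamma (n + 1) * Real.Gamma (m + 1)) = (n + m).choose m := by
  have h : (m : ℝ) + n + 1 = ((m + n : ℕ) : ℝ) + 1 := by push_cast; ring
  rw [h, Real.Gamma_nat_eq_factorial, Real.Gamma_nat_eq_factorial, Real.Gamma_nat_eq_factorial,
    add_comm n m, Nat.cast_add_choose, mul_comm (n ! : ℝ)]

open Nat in
theorem iteratedDeriv_inv_one_sub_mul_zero {𝕜 : Type*} [NontriviallyNormedField 𝕜] (a : 𝕜)
    (n : ℕ) : iteratedDeriv n (fun z => (1 - a * z)⁻¹) 0 = n ! * a ^ n := by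
  have h : (fun z : 𝕜 => (1 - a * z)⁻¹) = fun z => (-a * z + 1)⁻¹ := by
    funext z; rw [neg_mul, neg_add_eq_sub]
  rw [h, iteratedDeriv_eq_iterate, iter_deriv_inv_linear]
  simp only [mul_zero, zero_add, one_zpow, mul_one]
  rw [neg_pow a, mul_comm ((-1 : 𝕜) ^ n), mul_assoc, ← mul_assoc ((-1 : 𝕜) ^ n), ← mul_pow]
  simp

theorem Dfrac_const_mul_inv_one_sub_mul (m : ℕ) (c a w : ℂ) (hw : ‖a * w‖ < 1) :
    Dfrac m (fun z => c * (1 - a * z)⁻¹) w = c * ((1 - a * w) ^ (m + 1))⁻¹ := by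
  have hterm : ∀ n : ℕ,
      ((Real.Gamma (m + n + 1) / (Real.Gamma (n + 1) * Real.Gamma (m + 1)) : ℝ) : ℂ)
        * (iteratedDeriv n (fun z => c * (1 - a * z)⁻¹) 0 / (n.factorial : ℂ)) * w ^ n
      = c * ((n + m).choose m * (a * w) ^ n) := by
    intro n
    rw [Real.Gamma_nat_add_div_eq_choose, iteratedDeriv_const_mul_field,
      iteratedDeriv_inv_one_sub_mul_zero]
    field_simp [Nat.cast_ne_zero.2 n.factorial_ne_zero]
    push_cast
    ring
  rw [Dfrac, tsum_congr hterm, tsum_mul_left, tsum_choose_mul_geometric_of_norm_lt_one m hw,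
    one_div]

theorem norm_one_sub_mul_exp_le {ρ : ℝ} (hρ0 : 0 ≤ ρ) (hρ1 : ρ ≤ 1) (θ : ℝ) :
    ‖1 - ρ * Complex.exp (θ * Complex.I)‖ ≤ (1 - ρ) + |θ| := by
  have h : 1 - ρ * Complex.exp (θ * Complex.I)
      = ((1 - ρ : ℝ) : ℂ) - ρ * (Complex.exp (Complex.I * θ) - 1) := by push_cast; ring_nf
  calc ‖1 - ρ * Complex.exp (θ * Complex.I)‖
      ≤ ‖((1 - ρ : ℝ) : ℂ)‖ + ‖(ρ : ℂ)‖ * ‖Complex.exp (Complex.I * θ) - 1‖ := by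
        rw [h, ← norm_mul]; exact norm_sub_le _ _
    _ ≤ (1 - ρ) + 1 * |θ| := by
        rw [Complex.norm_real, Complex.norm_real, Real.norm_of_nonneg (by linarith),
          Real.norm_of_nonneg hρ0, ← Real.norm_eq_abs]
        gcongr
        exact Real.norm_exp_I_mul_ofReal_sub_one_le
    _ = (1 - ρ) + |θ| := by rw [one_mul]

theorem ofReal_le_MpE_of_le_norm {s : ℝ} (hs : 0 < s) {f : ℂ → ℂ} {R b t : ℝ} (hb : 0 ≤ b)
    (ht0 : 0 ≤ t) (ht : t ≤ 2 * Real.pi)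
    (hf : ∀ θ ∈ Set.Ioc 0 t, b ≤ ‖f (R * Complex.exp (θ * Complex.I))‖) :
    ENNReal.ofReal (((2 * Real.pi)⁻¹ * (b ^ s * t)) ^ (1 / s)) ≤ MpE s f R := by
  have hint : ENNReal.ofReal (b ^ s) * ENNReal.ofReal t ≤
      ∫⁻ θ in Set.Ioc 0 (2 * Real.pi),
        ENNReal.ofReal (‖f (R * Complex.exp (θ * Complex.I))‖ ^ s) :=
    calc ENNReal.ofReal (b ^ s) * ENNReal.ofReal t
        = ∫⁻ _ in Set.Ioc 0 t, ENNReal.ofReal (b ^ s) := by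
          rw [setLIntegral_const, Real.volume_Ioc, sub_zero]
      _ ≤ ∫⁻ θ in Set.Ioc 0 t, ENNReal.ofReal (‖f (R * Complex.exp (θ * Complex.I))‖ ^ s) :=
          setLIntegral_mono' measurableSet_Ioc fun θ hθ =>
            ENNReal.ofReal_le_ofReal (Real.rpow_le_rpow hb (hf θ hθ) hs.le)
      _ ≤ _ := lintegral_mono_set (Set.Ioc_subset_Ioc_right ht)
  rw [MpE, ← ENNReal.ofReal_rpow_of_nonneg (by positivity) (by positivity),
    ENNReal.ofReal_mul (by positivity), ENNReal.ofReal_inv_of_pos (by positivity),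
    ENNReal.ofReal_mul (by positivity), ENNReal.ofReal_mul (by positivity)]
  gcongr

theorem le_norm_Dfrac_test_function {r θ : ℝ} (hr0 : 0 ≤ r) (hr1 : r < 1) (hθ0 : 0 ≤ θ)
    (hθ : θ ≤ 1 - r) (m : ℕ) (e : ℝ) :
    (1 - r) ^ (e - (m + 1)) / 3 ^ (m + 1) ≤
      ‖Dfrac m (fun z => (((1 - r) ^ e : ℝ) : ℂ) * (1 - (r : ℂ) * z)⁻¹)
        (r * Complex.exp (θ * Complex.I))‖ := by
  have hrr : (r : ℂ) * (r * Complex.exp (θ * Complex.I))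
      = (r * r : ℝ) * Complex.exp (θ * Complex.I) := by
    push_cast; ring
  have hw : ‖(r : ℂ) * (r * Complex.exp (θ * Complex.I))‖ < 1 := by
    rw [hrr, norm_mul, Complex.norm_exp_ofReal_mul_I, mul_one, Complex.norm_real,
      Real.norm_of_nonneg (by positivity)]
    nlinarith
  have hpos : 0 < ‖1 - (r : ℂ) * (r * Complex.exp (θ * Complex.I))‖ := by
    refine norm_pos_iff.2 (sub_ne_zero.2 fun h => ?_)
    simp [← h] at hw
  have hle : ‖1 - (r : ℂ) * (r * Complex.exp (θ * Complex.I))‖ ≤ 3 * (1 - r) := by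
    rw [hrr]
    calc _ ≤ (1 - r * r) + |θ| := norm_one_sub_mul_exp_le (by positivity) (by nlinarith) θ
      _ ≤ 3 * (1 - r) := by rw [abs_of_nonneg hθ0]; nlinarith
  have ht : 0 < 1 - r := by linarith
  rw [Dfrac_const_mul_inv_one_sub_mul m _ _ _ hw, norm_mul, norm_inv, norm_pow, Complex.norm_real,
    Real.norm_of_nonneg (by positivity), Real.rpow_sub ht, ← div_eq_mul_inv,
    div_div, show ((m : ℝ) + 1) = ((m + 1 : ℕ) : ℝ) by push_cast; ring, Real.rpow_natCast,
    ← mul_pow, mul_comm]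
  gcongr

theorem test_function_Hnorm_lower_general (s p α k : ℝ) (m : ℕ) (hs : 1 < s)
    (hk : k - (m : ℝ) = 1 / p - 1 / s + α) :
    ∃ C : ℝ, 0 < C ∧ ∀ r ∈ Set.Ioo (1 / 2 : ℝ) 1,
      ENNReal.ofReal C ≤
        ⨆ R ∈ Set.Ico (0 : ℝ) 1,
          MpE s (Dfrac (m : ℝ) (fun z => (((1 - r) ^ (k + 1 - α - 1 / p) : ℝ) : ℂ)
            * (1 - (r : ℂ) * z)⁻¹)) R := by
  have hs0 : 0 < s := by linarith
  refine ⟨((2 * Real.pi)⁻¹ * (1 / ((3 : ℝ) ^ (m + 1)) ^ s)) ^ (1 / s), by positivity, ?_⟩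
  rintro r ⟨hr2, hr1⟩
  have ht : 0 < 1 - r := by linarith
  have hexponent : k + 1 - α - 1 / p - (m + 1) = -1 / s := by rw [neg_div]; linarith
  have hbound : ∀ θ ∈ Set.Ioc 0 (1 - r), (1 - r) ^ (-1 / s) / 3 ^ (m + 1) ≤
      ‖Dfrac m (fun z => (((1 - r) ^ (k + 1 - α - 1 / p) : ℝ) : ℂ) * (1 - (r : ℂ) * z)⁻¹)
        (r * Complex.exp (θ * Complex.I))‖ := fun θ hθ =>
    hexponent ▸ le_norm_Dfrac_test_function (by linarith) hr1 hθ.1.le hθ.2 m _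
  have hmass : ((1 - r) ^ (-1 / s) / 3 ^ (m + 1)) ^ s * (1 - r) = 1 / ((3 : ℝ) ^ (m + 1)) ^ s := by
    rw [Real.div_rpow (by positivity) (by positivity), ← Real.rpow_mul ht.le,
      div_mul_cancel₀ _ hs0.ne', Real.rpow_neg_one]
    field_simp
  refine le_iSup₂_of_le r ⟨by linarith, hr1⟩ ?_
  rw [← hmass]
  exact ofReal_le_MpE_of_le_norm hs0 (by positivity) ht.le (by linarith [Real.pi_gt_three]) hbound

/-- The test functions `f_r(z) = (1-r)^{k+1-α-1/p}/(1-rz)` have `H^s_m` norm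
bounded below for `r ∈ (1/2, 1)`, when `k - m = 1/p - 1/s + α`. -/
theorem test_function_Hnorm_lower (s p α k : ℝ) (m : ℕ) (hs : 1 < s)
    (hp : 0 < p) (hp1 : p ≤ 1) (hα : 0 < α) (hk0 : 0 < k) (hm : 1 ≤ m)
    (hk : k - (m : ℝ) = 1 / p - 1 / s + α) :
    ∃ C : ℝ, 0 < C ∧ ∀ r ∈ Set.Ioo (1 / 2 : ℝ) 1,
      ENNReal.ofReal C ≤
        ⨆ R ∈ Set.Ico (0 : ℝ) 1,
          MpE s (Dfrac (m : ℝ) (fun z => (((1 - r) ^ (k + 1 - α - 1 / p) : ℝ) : ℂ)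
            * (1 - (r : ℂ) * z)⁻¹)) R :=
  test_function_Hnorm_lower_general s p α k m hs hk
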